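/- Let S = {(R,m,t) ∈ (ℕ →₀ ℕ) × ℤ × ℤ : m ≠ 0 and R i = 0 for every i < v₂(m)} (the monomials that are sources of Tate differentials) and T = {(R,m,t) : R ≠ 0 and 2^(min(R)+1) divides m} (the monomials that are targets). Then: (i) S and T are disjoint; (ii) S ∪ T consists of all triples (R,m,t) except those with R = 0 and m = 0; (iii) Φ restricts to a bijection from S onto T, with inverse given by (R,m,t) ↦ (R − e_{min(R)}, m − 2^(min(R)), t − 2^(min(R)+1) + 1); (iv) Φ decreases the integer degree Σ_i (R i)·(2^i − 1) − m by exactly 1 and preserves the quantity Σ_i (R i)·(2^i − 1) + m − t. (Consequently the only monomials surviving the Tate spectral sequence for BPℝ are the powers of a.) -/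

import Mathlib

/-!
Monomials `v_R σ^m a^t` in the E₁-term `BP_*[σ, σ⁻¹, a, a⁻¹]` of the Tate
spectral sequence for Landweber's Real Brown–Peterson spectrum `BPℝ` are
encoded by triples `(R, m, t) ∈ (ℕ →₀ ℕ) × ℤ × ℤ`.
-/

/-- The 2-adic valuation of an integer. -/
noncomputable def v2 (m : ℤ) : ℕ := padicValInt 2 m

/-- `min R`: the least `i` with `R i ≠ 0` (for `R ≠ 0`). -/
noncomputable def minR (R : ℕ →₀ ℕ) : ℕ := sInf {i | R i ≠ 0}

/-- The Tate differential on monomials: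
`Φ(R, m, t) = (R + e_{v₂(m)}, m + 2^(v₂(m)), t + 2^(v₂(m)+1) − 1)`. -/
noncomputable def Φ : (ℕ →₀ ℕ) × ℤ × ℤ → (ℕ →₀ ℕ) × ℤ × ℤ := fun x =>
  (x.1 + Finsupp.single (v2 x.2.1) 1,
   x.2.1 + 2 ^ v2 x.2.1,
   x.2.2 + 2 ^ (v2 x.2.1 + 1) - 1)

/-- The claimed inverse of `Φ`:
`Ψ(R, m, t) = (R − e_{min(R)}, m − 2^(min(R)), t − 2^(min(R)+1) + 1)`. -/
noncomputable def Ψ : (ℕ →₀ ℕ) × ℤ × ℤ → (ℕ →₀ ℕ) × ℤ × ℤ := fun x =>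
  (x.1 - Finsupp.single (minR x.1) 1,
   x.2.1 - 2 ^ minR x.1,
   x.2.2 - 2 ^ (minR x.1 + 1) + 1)

/-- The integer degree `Σ_i (R i)·(2^i − 1) − m` of the monomial `(R, m, t)`. -/
noncomputable def deg (x : (ℕ →₀ ℕ) × ℤ × ℤ) : ℤ :=
  x.1.sum (fun i r => (r : ℤ) * (2 ^ i - 1)) - x.2.1

/-- The quantity `Σ_i (R i)·(2^i − 1) + m − t`. -/
noncomputable def qdeg (x : (ℕ →₀ ℕ) × ℤ × ℤ) : ℤ :=
  x.1.sum (fun i r => (r : ℤ) * (2 ^ i - 1)) + x.2.1 - x.2.2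

/-- The sources of Tate differentials: `m ≠ 0` and `R i = 0` for `i < v₂(m)`. -/
def S : Set ((ℕ →₀ ℕ) × ℤ × ℤ) :=
  {x | x.2.1 ≠ 0 ∧ ∀ i < v2 x.2.1, x.1 i = 0}

/-- The targets of Tate differentials: `R ≠ 0` and `2^(min(R)+1) ∣ m`. -/
def T : Set ((ℕ →₀ ℕ) × ℤ × ℤ) :=
  {x | x.1 ≠ 0 ∧ (2 : ℤ) ^ (minR x.1 + 1) ∣ x.2.1}


/-!
Φ and Ψ exchange the 2-adic valuation of `m` with the least index of `R`. If `2^s` exactly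
divides `m` and `R` vanishes below `s`, then `2^(s+1)` divides `m + 2^s` and `s` is the least
index of `R + e_s`; conversely, if `2^(s+1)` divides `m` then `2^s` exactly divides `m - 2^s`.
A triple with `m ≠ 0` and `R ≠ 0` lies in `S` when `v₂(m) ≤ min R` and in `T` when
`min R < v₂(m)`, which gives the partition.
-/

open Finsupp

lemma two_pow_v2_dvd (m : ℤ) : (2 : ℤ) ^ v2 m ∣ m := by
  exact_mod_cast padicValInt_dvd (p := 2) m

lemma two_pow_dvd_iff_le_v2 {m : ℤ} (hm : m ≠ 0) {n : ℕ} : (2 : ℤ) ^ n ∣ m ↔ n ≤ v2 m := by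
  simpa [v2, hm] using padicValInt_dvd_iff (p := 2) n m

lemma not_two_pow_succ_dvd_two_pow (s : ℕ) : ¬ (2 : ℤ) ^ (s + 1) ∣ 2 ^ s := by
  rw [pow_dvd_pow_iff two_ne_zero (by decide)]
  omega

lemma two_pow_succ_dvd_add_two_pow_v2 {m : ℤ} (hm : m ≠ 0) :
    (2 : ℤ) ^ (v2 m + 1) ∣ m + 2 ^ v2 m := by
  set s := v2 m
  obtain ⟨c, hc⟩ : (2 : ℤ) ^ s ∣ m := two_pow_v2_dvd m
  have hc_odd : ¬ (2 : ℤ) ∣ c := by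
    intro h2
    have h : (2 : ℤ) ^ (s + 1) ∣ m := by
      rw [hc, pow_succ]
      exact mul_dvd_mul_left _ h2
    have := (two_pow_dvd_iff_le_v2 hm).1 h
    omega
  rw [hc, pow_succ, ← mul_add_one]
  exact mul_dvd_mul_left _ (by omega)

lemma sub_two_pow_ne_zero {m : ℤ} {s : ℕ} (h : (2 : ℤ) ^ (s + 1) ∣ m) : m - 2 ^ s ≠ 0 := by
  intro h0
  rw [sub_eq_zero.1 h0] at h
  exact not_two_pow_succ_dvd_two_pow s h

lemma v2_sub_two_pow {m : ℤ} {s : ℕ} (h : (2 : ℤ) ^ (s + 1) ∣ m) : v2 (m - 2 ^ s) = s := by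
  have hne := sub_two_pow_ne_zero h
  have hs : (2 : ℤ) ^ s ∣ m - 2 ^ s :=
    dvd_sub ((pow_dvd_pow 2 s.le_succ).trans h) dvd_rfl
  have hs_succ : ¬ (2 : ℤ) ^ (s + 1) ∣ m - 2 ^ s := by
    rw [dvd_sub_right h]
    exact not_two_pow_succ_dvd_two_pow s
  rw [two_pow_dvd_iff_le_v2 hne] at hs hs_succ
  omega

lemma minR_le {R : ℕ →₀ ℕ} {i : ℕ} (hi : R i ≠ 0) : minR R ≤ i :=
  Nat.sInf_le hi

lemma apply_minR_ne_zero {R : ℕ →₀ ℕ} (hR : R ≠ 0) : R (minR R) ≠ 0 :=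
  Nat.sInf_mem (Finsupp.ne_iff.mp hR)

lemma apply_eq_zero_of_lt_minR {R : ℕ →₀ ℕ} {i : ℕ} (hi : i < minR R) : R i = 0 := by
  by_contra h
  exact (minR_le h).not_gt hi

lemma minR_eq {R : ℕ →₀ ℕ} {s : ℕ} (hs : R s ≠ 0) (h : ∀ i < s, R i = 0) : minR R = s := by
  have hR : R ≠ 0 := fun h0 => hs (by simp [h0])
  refine (minR_le hs).antisymm (not_lt.1 fun hlt => ?_)
  exact apply_minR_ne_zero hR (h _ hlt)

lemma minR_add_single {R : ℕ →₀ ℕ} {s : ℕ} (h : ∀ i < s, R i = 0) :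
    minR (R + single s 1) = s :=
  minR_eq (by simp) fun i hi => by simp [h i hi, hi.ne]

lemma sum_add_single_weight (R : ℕ →₀ ℕ) (s : ℕ) :
    (R + single s 1).sum (fun i r => (r : ℤ) * (2 ^ i - 1))
      = R.sum (fun i r => (r : ℤ) * (2 ^ i - 1)) + (2 ^ s - 1) := by
  rw [sum_add_index' (by simp) (by intros; push_cast; ring), sum_single_index (by simp)]
  simp

lemma disjoint_S_T : Disjoint S T := by
  rw [Set.disjoint_left]
  rintro ⟨R, m, t⟩ ⟨hm, hR_below⟩ ⟨hR, hdvd⟩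
  have hlt : minR R < v2 m := (two_pow_dvd_iff_le_v2 hm).1 hdvd
  exact apply_minR_ne_zero hR (hR_below _ hlt)

lemma S_union_T : S ∪ T = {x : (ℕ →₀ ℕ) × ℤ × ℤ | ¬(x.1 = 0 ∧ x.2.1 = 0)} := by
  ext ⟨R, m, t⟩
  simp only [Set.mem_union, S, T, Set.mem_ofPred_eq, not_and]
  constructor
  · rintro (⟨hm, -⟩ | ⟨hR, -⟩)
    exacts [fun _ => hm, fun h => absurd h hR]
  · intro h
    by_cases hm : m = 0
    · exact .inr ⟨fun hR => h hR hm, by simp [hm]⟩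
    by_cases hR_below : ∀ i < v2 m, R i = 0
    · exact .inl ⟨hm, hR_below⟩
    push Not at hR_below
    obtain ⟨i, hi, hRi⟩ := hR_below
    have hle : minR R + 1 ≤ v2 m := by have := minR_le hRi; omega
    exact .inr ⟨fun hR => hRi (by simp [hR]), (pow_dvd_pow 2 hle).trans (two_pow_v2_dvd m)⟩

section Bijection

variable {x y : (ℕ →₀ ℕ) × ℤ × ℤ}

lemma minR_Φ_fst (hx : x ∈ S) : minR (Φ x).1 = v2 x.2.1 :=
  minR_add_single hx.2

lemma Φ_mem_T (hx : x ∈ S) : Φ x ∈ T := by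
  refine ⟨fun h => by simpa [Φ] using DFunLike.congr_fun h (v2 x.2.1), ?_⟩
  rw [minR_Φ_fst hx]
  exact two_pow_succ_dvd_add_two_pow_v2 hx.1

lemma Ψ_Φ_of_mem_S (hx : x ∈ S) : Ψ (Φ x) = x := by
  simp only [Ψ, minR_Φ_fst hx]
  simp only [Φ, add_tsub_cancel_right]
  exact Prod.ext rfl (Prod.ext (by ring) (by ring))

lemma Ψ_mem_S (hy : y ∈ T) : Ψ y ∈ S := by
  refine ⟨sub_two_pow_ne_zero hy.2, fun i hi => ?_⟩
  simp only [Ψ, v2_sub_two_pow hy.2] at hi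
  simp [Ψ, apply_eq_zero_of_lt_minR hi]

lemma Φ_Ψ_of_mem_T (hy : y ∈ T) : Φ (Ψ y) = y := by
  have hle : single (minR y.1) 1 ≤ y.1 :=
    single_le_iff.2 (Nat.one_le_iff_ne_zero.2 (apply_minR_ne_zero hy.1))
  simp only [Φ, Ψ, v2_sub_two_pow hy.2, tsub_add_cancel_of_le hle]
  refine Prod.ext rfl (Prod.ext ?_ ?_) <;> dsimp only <;> ring

lemma invOn_Ψ_Φ : Set.InvOn Ψ Φ S T :=
  ⟨fun _ hx => Ψ_Φ_of_mem_S hx, fun _ hy => Φ_Ψ_of_mem_T hy⟩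

end Bijection

lemma deg_Φ (x : (ℕ →₀ ℕ) × ℤ × ℤ) : deg (Φ x) = deg x - 1 := by
  simp only [deg, Φ, sum_add_single_weight]
  ring

lemma qdeg_Φ (x : (ℕ →₀ ℕ) × ℤ × ℤ) : qdeg (Φ x) = qdeg x := by
  simp only [qdeg, Φ, sum_add_single_weight]
  ring

theorem tate_spectral_sequence_BPR :
    -- (i) `S` and `T` are disjoint
    Disjoint S T ∧
    -- (ii) `S ∪ T` consists of all triples except those with `R = 0` and `m = 0`
    S ∪ T = {x : (ℕ →₀ ℕ) × ℤ × ℤ | ¬(x.1 = 0 ∧ x.2.1 = 0)} ∧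
    -- (iii) `Φ` restricts to a bijection from `S` onto `T`, with inverse `Ψ`
    Set.BijOn Φ S T ∧
    (∀ x ∈ S, Ψ (Φ x) = x) ∧
    (∀ y ∈ T, Ψ y ∈ S ∧ Φ (Ψ y) = y) ∧
    -- (iv) `Φ` decreases the integer degree by exactly 1 and preserves `qdeg`
    (∀ x : (ℕ →₀ ℕ) × ℤ × ℤ, x.2.1 ≠ 0 →
      deg (Φ x) = deg x - 1 ∧ qdeg (Φ x) = qdeg x) :=
  ⟨disjoint_S_T, S_union_T,
    invOn_Ψ_Φ.bijOn (fun _ => Φ_mem_T) (fun _ => Ψ_mem_S),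
    fun _ => Ψ_Φ_of_mem_S, fun _ hy => ⟨Ψ_mem_S hy, Φ_Ψ_of_mem_T hy⟩,
    fun x _ => ⟨deg_Φ x, qdeg_Φ x⟩⟩
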